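/- arXiv:1203.2287 — 3 statements merged into one kernel-verified Lean document; each statement's English description precedes it below -/
import Mathlib

section
/- Let A* = {s ∈ {1,…,k} : π(s) > 0 and PD(s) > c_N/(c_N+c_D)}. Assume that for every grade s with π(s) > 0 one has PD(s) ≠ c_N/(c_N+c_D). Then any set A ⊆ {1,…,k} with C(A) = C(A*) satisfies A ∩ {s : π(s) > 0} = A* ∩ {s : π(s) > 0}; that is, the minimizer of the expected misclassification cost is unique up to grades of zero unconditional probability. -/
/-!
Up to a constant, `C(A) = ∑ s ∈ A, g s` with `g s = c_N (1 - p) ℓ_N(s) - c_D p ℓ_D(s)`, the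
marginal cost of classifying grade `s` as defaulting. A sum `∑ s ∈ A, g s` over subsets of the
grades is minimal exactly when `A` contains every grade with `g s < 0` and no grade with
`g s > 0`. Since `PD(s) - c_N/(c_N+c_D)` has the sign of `-g s`, the grades with `g s < 0` form `A*`,
and the hypothesis on `PD` makes `g` vanish exactly where `π` does.
-/

open Finset

section NegativeSet

variable {ι M : Type*} [DecidableEq ι] [AddCommGroup M] [LinearOrder M] [IsOrderedAddMonoid M]

theorem filter_ne_zero_eq_filter_neg_of_sum_eq {U A : Finset ι} {g : ι → M} (hA : A ⊆ U)
    (hsum : ∑ s ∈ A, g s = ∑ s ∈ U.filter (g · < 0), g s) :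
    A.filter (g · ≠ 0) = U.filter (g · < 0) := by
  set N := U.filter (g · < 0)
  have hneg : ∀ s ∈ N, g s < 0 := fun s hs ↦ (mem_filter.mp hs).2
  have hnonneg : ∀ s ∈ A \ N, 0 ≤ g s := fun s hs ↦
    not_lt.mp fun hlt ↦ (mem_sdiff.mp hs).2 (mem_filter.mpr ⟨hA (mem_sdiff.mp hs).1, hlt⟩)
  have hnonpos : ∀ s ∈ N \ A, g s ≤ 0 := fun s hs ↦ (hneg s (mem_sdiff.mp hs).1).le
  -- `∑ A - ∑ N` is a nonnegative sum minus a nonpositive one, so both vanish.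
  have heq : ∑ s ∈ A \ N, g s = ∑ s ∈ N \ A, g s := by
    rw [← sub_eq_zero, sum_sdiff_sub_sum_sdiff, hsum, sub_self]
  have hge := sum_nonneg hnonneg
  have hle := sum_nonpos hnonpos
  have hzero : ∀ s ∈ A \ N, g s = 0 :=
    (sum_eq_zero_iff_of_nonneg hnonneg).mp (le_antisymm (heq.trans_le hle) hge)
  have hNA : ∀ s ∈ N \ A, g s = 0 :=
    (sum_eq_zero_iff_of_nonpos hnonpos).mp (le_antisymm hle (hge.trans_eq heq))
  ext s
  constructor
  · intro hs
    obtain ⟨hsA, hgs⟩ := mem_filter.mp hs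
    by_contra hsN
    exact hgs (hzero s (mem_sdiff.mpr ⟨hsA, hsN⟩))
  · intro hsN
    have hsA : s ∈ A := by
      by_contra hsA
      exact (hneg s hsN).ne (hNA s (mem_sdiff.mpr ⟨hsN, hsA⟩))
    exact mem_filter.mpr ⟨hsA, (hneg s hsN).ne⟩

end NegativeSet

/-- The change in expected misclassification cost when a grade `s` with `d = ℓ_D(s)`,
`n = ℓ_N(s)` is added to the set of grades classified as defaulting. -/
def marginalCost (p cD cN d n : ℝ) : ℝ := cN * (1 - p) * n - cD * p * d

theorem cost_eq_add_sum_marginalCost {ι : Type*} [DecidableEq ι] {U B : Finset ι} (hB : B ⊆ U)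
    (p cD cN : ℝ) (ℓD ℓN : ι → ℝ) :
    cD * p * ∑ s ∈ U \ B, ℓD s + cN * (1 - p) * ∑ s ∈ B, ℓN s
      = cD * p * ∑ s ∈ U, ℓD s + ∑ s ∈ B, marginalCost p cD cN (ℓD s) (ℓN s) := by
  simp only [marginalCost, sum_sdiff_eq_sub hB, sum_sub_distrib, ← mul_sum]
  ring

section Grade

variable {p cD cN d n π : ℝ}

theorem div_sub_threshold_eq (hπ : π = p * d + (1 - p) * n) (hπpos : 0 < π)
    (hc : 0 < cN + cD) :
    p * d / π - cN / (cN + cD) = -marginalCost p cD cN d n / (π * (cN + cD)) := by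
  rw [div_sub_div _ _ hπpos.ne' hc.ne', marginalCost, hπ]
  ring

theorem threshold_lt_div_iff (hπ : π = p * d + (1 - p) * n) (hπpos : 0 < π)
    (hc : 0 < cN + cD) :
    cN / (cN + cD) < p * d / π ↔ marginalCost p cD cN d n < 0 := by
  rw [← sub_pos, div_sub_threshold_eq hπ hπpos hc, div_pos_iff_of_pos_right (mul_pos hπpos hc),
    neg_pos]

theorem div_eq_threshold_iff (hπ : π = p * d + (1 - p) * n) (hπpos : 0 < π)
    (hc : 0 < cN + cD) :
    p * d / π = cN / (cN + cD) ↔ marginalCost p cD cN d n = 0 := by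
  rw [← sub_eq_zero, div_sub_threshold_eq hπ hπpos hc, div_eq_zero_iff, neg_eq_zero,
    or_iff_left (mul_pos hπpos hc).ne']

theorem pos_of_marginalCost_ne_zero (hπ : π = p * d + (1 - p) * n) (hp0 : 0 < p) (hp1 : p < 1)
    (hd : 0 ≤ d) (hn : 0 ≤ n) (h : marginalCost p cD cN d n ≠ 0) : 0 < π := by
  by_contra hπpos
  have hd0 : d = 0 := by nlinarith
  have hn0 : n = 0 := by nlinarith
  simp [marginalCost, hd0, hn0] at h

end Grade

theorem natural_classification_set_unique_minimizer_general
    (k : ℕ) (p cD cN : ℝ) (ℓD ℓN : ℕ → ℝ)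
    (hp0 : 0 < p) (hp1 : p < 1) (hcD : 0 < cD) (hcN : 0 < cN)
    (hℓD : ∀ s ∈ Finset.Icc 1 k, 0 ≤ ℓD s ∧ ℓD s ≤ 1)
    (hℓN : ∀ s ∈ Finset.Icc 1 k, 0 ≤ ℓN s ∧ ℓN s ≤ 1)
    (π : ℕ → ℝ) (hπ : ∀ s, π s = p * ℓD s + (1 - p) * ℓN s)
    (PD : ℕ → ℝ) (hPD : ∀ s, 0 < π s → PD s = p * ℓD s / π s)
    (hne : ∀ s ∈ Finset.Icc 1 k, 0 < π s → PD s ≠ cN / (cN + cD))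
    (C : Finset ℕ → ℝ)
    (hC : ∀ A, C A = cD * p * ∑ s ∈ Finset.Icc 1 k \ A, ℓD s
                    + cN * (1 - p) * ∑ s ∈ A, ℓN s)
    (Astar : Finset ℕ)
    (hAstar : Astar = (Finset.Icc 1 k).filter
        (fun s => 0 < π s ∧ PD s > cN / (cN + cD))) :
    ∀ A ⊆ Finset.Icc 1 k, C A = C Astar →
      A.filter (fun s => 0 < π s) = Astar.filter (fun s => 0 < π s) := by
  intro A hA hCA
  set g : ℕ → ℝ := fun s ↦ marginalCost p cD cN (ℓD s) (ℓN s)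
  have hc : 0 < cN + cD := add_pos hcN hcD
  have hpos_iff : ∀ s ∈ Icc 1 k, 0 < π s ↔ g s ≠ 0 := fun s hs ↦
    ⟨fun hπs ↦ (div_eq_threshold_iff (hπ s) hπs hc).not.mp (hPD s hπs ▸ hne s hs hπs),
      pos_of_marginalCost_ne_zero (hπ s) hp0 hp1 (hℓD s hs).1 (hℓN s hs).1⟩
  have hAstar_eq : Astar = (Icc 1 k).filter (g · < 0) := by
    refine hAstar.trans (filter_congr fun s hs ↦ ⟨fun ⟨hπs, hgt⟩ ↦ ?_, fun hgs ↦ ?_⟩)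
    · rwa [hPD s hπs, gt_iff_lt, threshold_lt_div_iff (hπ s) hπs hc] at hgt
    · have hπs := (hpos_iff s hs).mpr hgs.ne
      rw [hPD s hπs, gt_iff_lt, threshold_lt_div_iff (hπ s) hπs hc]
      exact ⟨hπs, hgs⟩
  have hsum : ∑ s ∈ A, g s = ∑ s ∈ (Icc 1 k).filter (g · < 0), g s := by
    have hcostA := cost_eq_add_sum_marginalCost hA p cD cN ℓD ℓN
    have hcostAstar := cost_eq_add_sum_marginalCost (hAstar_eq ▸ filter_subset _ _) p cD cN ℓD ℓN
    rw [← hC] at hcostA hcostAstar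
    rw [← hAstar_eq]
    linarith
  calc A.filter (0 < π ·) = A.filter (g · ≠ 0) := filter_congr fun s hs ↦ hpos_iff s (hA hs)
    _ = Astar := (filter_ne_zero_eq_filter_neg_of_sum_eq hA hsum).trans hAstar_eq.symm
    _ = Astar.filter (0 < π ·) :=
      (filter_true_of_mem fun s hs ↦ (mem_filter.mp (hAstar ▸ hs)).2.1).symm

/-- If `PD(s) ≠ c_N/(c_N+c_D)` whenever `π(s) > 0`, then the minimizer of the
expected misclassification cost is unique up to grades of zero unconditional probability. -/
theorem natural_classification_set_unique_minimizer
    (k : ℕ) (p cD cN : ℝ) (ℓD ℓN : ℕ → ℝ)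
    (hp0 : 0 < p) (hp1 : p < 1) (hcD : 0 < cD) (hcN : 0 < cN)
    (hℓD : ∀ s ∈ Finset.Icc 1 k, 0 ≤ ℓD s ∧ ℓD s ≤ 1)
    (hℓN : ∀ s ∈ Finset.Icc 1 k, 0 ≤ ℓN s ∧ ℓN s ≤ 1)
    (hℓDsum : ∑ s ∈ Finset.Icc 1 k, ℓD s = 1)
    (hℓNsum : ∑ s ∈ Finset.Icc 1 k, ℓN s = 1)
    (π : ℕ → ℝ) (hπ : ∀ s, π s = p * ℓD s + (1 - p) * ℓN s)
    (PD : ℕ → ℝ) (hPD : ∀ s, 0 < π s → PD s = p * ℓD s / π s)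
    (hne : ∀ s ∈ Finset.Icc 1 k, 0 < π s → PD s ≠ cN / (cN + cD))
    (C : Finset ℕ → ℝ)
    (hC : ∀ A, C A = cD * p * ∑ s ∈ Finset.Icc 1 k \ A, ℓD s
                    + cN * (1 - p) * ∑ s ∈ A, ℓN s)
    (Astar : Finset ℕ)
    (hAstar : Astar = (Finset.Icc 1 k).filter
        (fun s => 0 < π s ∧ PD s > cN / (cN + cD))) :
    ∀ A ⊆ Finset.Icc 1 k, C A = C Astar →
      A.filter (fun s => 0 < π s) = Astar.filter (fun s => 0 < π s) :=
  natural_classification_set_unique_minimizer_general k p cD cN ℓD ℓN hp0 hp1 hcD hcN hℓD hℓN π hπ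
    PD hPD hne C hC Astar hAstar
end

section
/- Assume ℓ_N(s) > 0 for all s ∈ {1,…,k} and that the likelihood ratio s ↦ ℓ_D(s)/ℓ_N(s) is nonincreasing in s. Define the conditional cumulative distribution functions F_D(s) = Σ_{t≤s} ℓ_D(t) and F_N(s) = Σ_{t≤s} ℓ_N(t) for s ∈ {0,1,…,k} (with F_D(0) = F_N(0) = 0). Then the minimum over all sets A ⊆ {1,…,k} of the quantity Σ_{s∉A} ℓ_D(s) + Σ_{s∈A} ℓ_N(s) (the expected misclassification cost for cost parameters c_D = 1/p, c_N = 1/(1−p)) equals 1 − max_{0≤s≤k} |F_D(s) − F_N(s)|, i.e. one minus the Kolmogorov–Smirnov distance between the two conditional distributions. -/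
open Finset

/-!
Writing `D = ℓ_D - ℓ_N`, the cost of `A` is `1 - ∑_{s ∈ A} D s`, so the optimal `A` is the set `P`
where `D ≥ 0`. Since the partial sums of `D` vanish at `0` and at `k`, every
`|F_D(s) - F_N(s)| = |∑_{t ≤ s} D t|` is at most `∑_P D`. A nonincreasing likelihood ratio makes
`P` an initial segment `{1, …, m}`, and then `F_D(m) - F_N(m) = ∑_P D` attains this bound.
-/

section Sums

variable {ι M : Type*}

theorem Finset.sum_le_sum_filter_nonneg [AddCommMonoid M] [LinearOrder M] [IsOrderedAddMonoid M]
    {s t : Finset ι} (f : ι → M) (h : t ⊆ s) :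
    ∑ i ∈ t, f i ≤ ∑ i ∈ s with 0 ≤ f i, f i := by
  have hneg : ∑ i ∈ t with ¬0 ≤ f i, f i ≤ 0 :=
    sum_nonpos fun i hi => (not_le.mp (mem_filter.mp hi).2).le
  calc ∑ i ∈ t, f i
      = ∑ i ∈ t with 0 ≤ f i, f i + ∑ i ∈ t with ¬0 ≤ f i, f i :=
        (sum_filter_add_sum_filter_not t _ f).symm
    _ ≤ ∑ i ∈ t with 0 ≤ f i, f i := add_le_of_nonpos_right hneg
    _ ≤ ∑ i ∈ s with 0 ≤ f i, f i :=
        sum_le_sum_of_subset_of_nonneg (filter_subset_filter _ h)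
          fun i hi _ => (mem_filter.mp hi).2

theorem Finset.abs_sum_le_sum_filter_nonneg_of_sum_eq_zero [DecidableEq ι] [AddCommGroup M]
    [LinearOrder M] [IsOrderedAddMonoid M] {s t : Finset ι} {f : ι → M}
    (hf : ∑ i ∈ s, f i = 0) (h : t ⊆ s) :
    |∑ i ∈ t, f i| ≤ ∑ i ∈ s with 0 ≤ f i, f i := by
  have hcompl : ∑ i ∈ s \ t, f i = -∑ i ∈ t, f i := by
    rw [sum_sdiff_eq_sub h, hf, zero_sub]
  refine abs_le'.mpr ⟨sum_le_sum_filter_nonneg f h, ?_⟩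
  rw [← hcompl]
  exact sum_le_sum_filter_nonneg f sdiff_subset

theorem Finset.sum_sdiff_add_sum_eq_sub [DecidableEq ι] [AddCommGroup M] {s t : Finset ι}
    (f g : ι → M) (h : t ⊆ s) :
    ∑ i ∈ s \ t, f i + ∑ i ∈ t, g i = ∑ i ∈ s, f i - ∑ i ∈ t, (f i - g i) := by
  rw [sum_sdiff_eq_sub h, sum_sub_distrib]
  abel

end Sums

theorem Finset.eq_Icc_one_sup_of_Icc_subset {P : Finset ℕ} (hzero : 0 ∉ P)
    (hdown : ∀ t ∈ P, Icc 1 t ⊆ P) : P = Icc 1 (P.sup id) := by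
  ext s
  constructor
  · intro hs
    exact mem_Icc.mpr ⟨Nat.one_le_iff_ne_zero.mpr (ne_of_mem_of_not_mem hs hzero),
      le_sup (f := id) hs⟩
  · intro hs
    rcases P.eq_empty_or_nonempty with hempty | hne
    · simp [hempty] at hs
    · obtain ⟨t, ht, hsup⟩ := exists_mem_eq_sup P hne id
      exact hdown t ht (by rwa [hsup] at hs)

theorem le_of_div_le_div_of_le {a b c d : ℝ} (hb : 0 < b) (hd : 0 < d) (hratio : c / d ≤ a / b)
    (h : d ≤ c) : b ≤ a :=
  (one_le_div hb).mp (((one_le_div hd).mpr h).trans hratio)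

theorem exists_filter_nonneg_sub_eq_Icc (k : ℕ) (ℓD ℓN : ℕ → ℝ)
    (hℓNpos : ∀ s ∈ Icc 1 k, 0 < ℓN s)
    (hmono : ∀ s ∈ Icc 1 k, ∀ t ∈ Icc 1 k, s ≤ t → ℓD t / ℓN t ≤ ℓD s / ℓN s) :
    ∃ m ≤ k, {s ∈ Icc 1 k | 0 ≤ ℓD s - ℓN s} = Icc 1 m := by
  set P := {s ∈ Icc 1 k | 0 ≤ ℓD s - ℓN s}
  have hPsub : P ⊆ Icc 1 k := filter_subset _ _
  have hdown : ∀ t ∈ P, Icc 1 t ⊆ P := by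
    intro t ht s hs
    obtain ⟨htk, hDt⟩ := mem_filter.mp ht
    have hsk : s ∈ Icc 1 k := Icc_subset_Icc_right (mem_Icc.mp htk).2 hs
    refine mem_filter.mpr ⟨hsk, sub_nonneg.mpr ?_⟩
    exact le_of_div_le_div_of_le (hℓNpos s hsk) (hℓNpos t htk)
      (hmono s hsk t htk (mem_Icc.mp hs).2) (sub_nonneg.mp hDt)
  have hzero : 0 ∉ P := fun h => by simpa using hPsub h
  exact ⟨P.sup id, Finset.sup_le fun t ht => (mem_Icc.mp (hPsub ht)).2,
    eq_Icc_one_sup_of_Icc_subset hzero hdown⟩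

theorem min_cost_eq_one_sub_kolmogorov_smirnov_general
    (k : ℕ) (ℓD ℓN : ℕ → ℝ)
    (hℓDsum : ∑ s ∈ Finset.Icc 1 k, ℓD s = 1)
    (hℓNsum : ∑ s ∈ Finset.Icc 1 k, ℓN s = 1)
    (hℓNpos : ∀ s ∈ Finset.Icc 1 k, 0 < ℓN s)
    (hmono : ∀ s ∈ Finset.Icc 1 k, ∀ t ∈ Finset.Icc 1 k,
        s ≤ t → ℓD t / ℓN t ≤ ℓD s / ℓN s)
    (FD FN : ℕ → ℝ)
    (hFD : ∀ s, FD s = ∑ t ∈ Finset.Icc 1 s, ℓD t)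
    (hFN : ∀ s, FN s = ∑ t ∈ Finset.Icc 1 s, ℓN t) :
    IsLeast
      {c : ℝ | ∃ A ⊆ Finset.Icc 1 k,
        c = ∑ s ∈ Finset.Icc 1 k \ A, ℓD s + ∑ s ∈ A, ℓN s}
      (1 - (Finset.Icc 0 k).sup' (Finset.nonempty_Icc.mpr (Nat.zero_le k))
            (fun s => |FD s - FN s|)) := by
  set D : ℕ → ℝ := fun s => ℓD s - ℓN s
  have hpartial : ∀ s, FD s - FN s = ∑ t ∈ Icc 1 s, D t := fun s => by
    rw [hFD, hFN, sum_sub_distrib]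
  have htotal : ∑ s ∈ Icc 1 k, D s = 0 := by
    rw [sum_sub_distrib, hℓDsum, hℓNsum, sub_self]
  obtain ⟨m, hmk, hP⟩ := exists_filter_nonneg_sub_eq_Icc k ℓD ℓN hℓNpos hmono
  have hsup : (Icc 0 k).sup' (nonempty_Icc.mpr (Nat.zero_le k)) (fun s => |FD s - FN s|)
      = ∑ s ∈ Icc 1 k with 0 ≤ D s, D s := by
    refine le_antisymm (sup'_le _ _ fun s hs => ?_) ?_
    · rw [hpartial]
      exact abs_sum_le_sum_filter_nonneg_of_sum_eq_zero htotal
        (Icc_subset_Icc_right (mem_Icc.mp hs).2)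
    · refine le_sup'_of_le _ (mem_Icc.mpr ⟨m.zero_le, hmk⟩) ?_
      rw [hpartial, ← hP]
      exact le_abs_self _
  have hcost : ∀ A ⊆ Icc 1 k, ∑ s ∈ Icc 1 k \ A, ℓD s + ∑ s ∈ A, ℓN s = 1 - ∑ s ∈ A, D s :=
    fun A hA => by rw [sum_sdiff_add_sum_eq_sub ℓD ℓN hA, hℓDsum]
  refine ⟨⟨{s ∈ Icc 1 k | 0 ≤ D s}, filter_subset _ _,
    by rw [hcost _ (filter_subset _ _), hsup]⟩, ?_⟩
  rintro c ⟨A, hA, rfl⟩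
  rw [hcost A hA, hsup]
  exact sub_le_sub_left (sum_le_sum_filter_nonneg D hA) 1

/-- Under a nonincreasing likelihood ratio, the minimal expected
misclassification cost (with cost parameters `c_D = 1/p`, `c_N = 1/(1−p)`, i.e. the minimum
over sets `A` of `Σ_{s∉A} ℓ_D(s) + Σ_{s∈A} ℓ_N(s)`) equals one minus the Kolmogorov–Smirnov
distance between the two conditional rating distributions. -/
theorem min_cost_eq_one_sub_kolmogorov_smirnov
    (k : ℕ) (ℓD ℓN : ℕ → ℝ)
    (hℓD : ∀ s ∈ Finset.Icc 1 k, 0 ≤ ℓD s ∧ ℓD s ≤ 1)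
    (hℓN : ∀ s ∈ Finset.Icc 1 k, 0 ≤ ℓN s ∧ ℓN s ≤ 1)
    (hℓDsum : ∑ s ∈ Finset.Icc 1 k, ℓD s = 1)
    (hℓNsum : ∑ s ∈ Finset.Icc 1 k, ℓN s = 1)
    (hℓNpos : ∀ s ∈ Finset.Icc 1 k, 0 < ℓN s)
    (hmono : ∀ s ∈ Finset.Icc 1 k, ∀ t ∈ Finset.Icc 1 k,
        s ≤ t → ℓD t / ℓN t ≤ ℓD s / ℓN s)
    (FD FN : ℕ → ℝ)
    (hFD : ∀ s, FD s = ∑ t ∈ Finset.Icc 1 s, ℓD t)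
    (hFN : ∀ s, FN s = ∑ t ∈ Finset.Icc 1 s, ℓN t) :
    IsLeast
      {c : ℝ | ∃ A ⊆ Finset.Icc 1 k,
        c = ∑ s ∈ Finset.Icc 1 k \ A, ℓD s + ∑ s ∈ A, ℓN s}
      (1 - (Finset.Icc 0 k).sup' (Finset.nonempty_Icc.mpr (Nat.zero_le k))
            (fun s => |FD s - FN s|)) :=
  min_cost_eq_one_sub_kolmogorov_smirnov_general k ℓD ℓN hℓDsum hℓNsum hℓNpos hmono FD FN hFD hFN
end

section
/- Let k ≥ 1, let π : {1,…,k} → [0,1] satisfy Σ_s π(s) = 1, let q : {1,…,k} → [0,1] be a PD curve, and set p = Σ_s q(s)·π(s), assumed to lie in (0,1). Define conditional probability mass functions ℓ_D(s) = q(s)·π(s)/p and ℓ_N(s) = (1−q(s))·π(s)/(1−p), and let S_D, S_N be independent random variables on {1,…,k} with mass functions ℓ_D and ℓ_N respectively. Then the accuracy ratio AR = P[S_D < S_N] − P[S_D > S_N] satisfies AR = (1/(p(1−p)))·( 2·Σ_{s=1}^k (1−q(s))·π(s)·Σ_{t=1}^{s−1} q(t)·π(t) + Σ_{s=1}^k q(s)·(1−q(s))·π(s)²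 ) − 1. -/
/-! The events `{S_D < S_N}`, `{S_D = S_N}`, `{S_D > S_N}` partition the sample space, so
`AR = 2 P[S_D < S_N] + P[S_D = S_N] - 1`. By independence, each of these two probabilities is the
sum of `ℓ_D(s) ℓ_N(t)` over the pairs of grades `(s, t)` in the relation, and
`ℓ_D(s) ℓ_N(t) = q(s) π(s) (1 - q(t)) π(t) / (p (1 - p))`. -/
open MeasureTheory ProbabilityTheory Finset

section
variable {Ω α β : Type*} [MeasurableSpace Ω] {P : Measure Ω}
  [MeasurableSpace α] [MeasurableSingletonClass α] [MeasurableSpace β] [MeasurableSingletonClass β]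

lemma ae_mem_of_sum_measureReal_preimage_singleton [IsProbabilityMeasure P] {X : Ω → α}
    (hX : Measurable X) {F : Finset α} (hF : ∑ s ∈ F, P.real (X ⁻¹' {s}) = 1) :
    ∀ᵐ ω ∂P, X ω ∈ F := by
  rw [sum_measureReal_preimage_singleton F fun _ _ => hX (measurableSet_singleton _)] at hF
  rw [ae_iff]
  change P (X ⁻¹' F)ᶜ = 0
  rw [← measureReal_eq_zero_iff, probReal_compl_eq_one_sub (hX F.measurableSet), hF, sub_self]

lemma measureReal_preimage_eq_sum_of_ae_mem [IsFiniteMeasure P] {X : Ω → α} (hX : Measurable X)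
    {F : Finset α} (hF : ∀ᵐ ω ∂P, X ω ∈ F) (R : Set α) [DecidablePred (· ∈ R)] :
    P.real (X ⁻¹' R) = ∑ s ∈ F with s ∈ R, P.real (X ⁻¹' {s}) := by
  rw [sum_measureReal_preimage_singleton _ fun _ _ => hX (measurableSet_singleton _)]
  refine measureReal_congr ?_
  filter_upwards [hF] with ω hω
  change (X ω ∈ R) = (X ω ∈ ({s ∈ F | s ∈ R} : Finset α))
  simp [hω]

lemma ProbabilityTheory.IndepFun.measureReal_eq_sum [IsProbabilityMeasure P]
    {X : Ω → α} {Y : Ω → β}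
    (hX : Measurable X) (hY : Measurable Y) (hXY : IndepFun X Y P)
    {F : Finset α} {G : Finset β} {f : α → ℝ} {g : β → ℝ}
    (hlawX : ∀ s ∈ F, P.real (X ⁻¹' {s}) = f s) (hlawY : ∀ t ∈ G, P.real (Y ⁻¹' {t}) = g t)
    (hf : ∑ s ∈ F, f s = 1) (hg : ∑ t ∈ G, g t = 1) (r : α → β → Prop) [DecidableRel r] :
    P.real {ω | r (X ω) (Y ω)} = ∑ s ∈ F, ∑ t ∈ G with r s t, f s * g t := by
  classical
  have hF := ae_mem_of_sum_measureReal_preimage_singleton hX (P := P)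
    (by rwa [sum_congr rfl hlawX])
  have hG := ae_mem_of_sum_measureReal_preimage_singleton hY (P := P)
    (by rwa [sum_congr rfl hlawY])
  have hFG : ∀ᵐ ω ∂P, (X ω, Y ω) ∈ F ×ˢ G := by
    filter_upwards [hF, hG] with ω hωX hωY using mem_product.2 ⟨hωX, hωY⟩
  rw [show {ω | r (X ω) (Y ω)} = (fun ω => (X ω, Y ω)) ⁻¹' {z | r z.1 z.2} from rfl,
    measureReal_preimage_eq_sum_of_ae_mem (hX.prodMk hY) hFG, sum_filter, sum_product]
  refine sum_congr rfl fun s hs => ?_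
  rw [sum_filter]
  refine sum_congr rfl fun t ht => if_congr Iff.rfl ?_ rfl
  rw [← Set.singleton_prod_singleton, Set.mk_preimage_prod, measureReal_def,
    hXY.measure_inter_preimage_eq_mul _ _ (measurableSet_singleton s) (measurableSet_singleton t),
    ENNReal.toReal_mul, ← measureReal_def, ← measureReal_def, hlawX s hs, hlawY t ht]

lemma measureReal_lt_sub_measureReal_gt [IsProbabilityMeasure P] [LinearOrder α] [Countable α]
    {X Y : Ω → α} (hX : Measurable X) (hY : Measurable Y) :
    P.real {ω | X ω < Y ω} - P.real {ω | Y ω < X ω} =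
      2 * P.real {ω | X ω < Y ω} + P.real {ω | X ω = Y ω} - 1 := by
  have hlt : MeasurableSet {ω | X ω < Y ω} :=
    (hX.prodMk hY) (MeasurableSet.of_discrete (s := {z : α × α | z.1 < z.2}))
  have heq : MeasurableSet {ω | X ω = Y ω} :=
    (hX.prodMk hY) (MeasurableSet.of_discrete (s := {z : α × α | z.1 = z.2}))
  have hgt : {ω | Y ω < X ω} = ({ω | X ω < Y ω} ∪ {ω | X ω = Y ω})ᶜ := by
    ext ω
    simp only [Set.mem_ofPred_eq, Set.mem_compl_iff, Set.mem_union, not_or, not_lt]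
    exact lt_iff_le_and_ne.trans (and_congr_right' ne_comm)
  have hdisj : Disjoint {ω | X ω < Y ω} {ω | X ω = Y ω} :=
    Set.disjoint_left.2 fun _ h => ne_of_lt h
  rw [hgt, probReal_compl_eq_one_sub (hlt.union heq), measureReal_union hdisj heq]
  ring
end

lemma sum_Icc_sum_filter_lt {R : Type*} [CommSemiring R] (k : ℕ) (f g : ℕ → R) :
    ∑ s ∈ Icc 1 k, ∑ t ∈ Icc 1 k with s < t, f s * g t =
      ∑ t ∈ Icc 1 k, g t * ∑ s ∈ Icc 1 (t - 1), f s := by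
  simp_rw [mul_sum, mul_comm (g _)]
  exact sum_comm' fun s t => by simp only [mem_Icc, mem_filter]; omega

lemma Finset.sum_sum_filter_eq {β γ : Type*} [AddCommMonoid β] [DecidableEq γ] (F : Finset γ)
    (f : γ → γ → β) : ∑ s ∈ F, ∑ t ∈ F with s = t, f s t = ∑ s ∈ F, f s s := by
  simp [sum_filter]

theorem discrete_accuracy_ratio_ex_ante_general
    {Ω : Type*} [MeasurableSpace Ω] (P : Measure Ω) [IsProbabilityMeasure P]
    (k : ℕ) (π q : ℕ → ℝ)
    (hπsum : ∑ s ∈ Finset.Icc 1 k, π s = 1)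
    (p : ℝ) (hp : p = ∑ s ∈ Finset.Icc 1 k, q s * π s)
    (hp0 : 0 < p) (hp1 : p < 1)
    (ℓD ℓN : ℕ → ℝ)
    (hℓD : ∀ s, ℓD s = q s * π s / p)
    (hℓN : ∀ s, ℓN s = (1 - q s) * π s / (1 - p))
    (SD SN : Ω → ℕ) (hSDm : Measurable SD) (hSNm : Measurable SN)
    (hindep : IndepFun SD SN P)
    (hSDlaw : ∀ s : ℕ,
      (P {ω | SD ω = s}).toReal = if s ∈ Finset.Icc 1 k then ℓD s else 0)
    (hSNlaw : ∀ s : ℕ,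
      (P {ω | SN ω = s}).toReal = if s ∈ Finset.Icc 1 k then ℓN s else 0)
    (AR : ℝ)
    (hAR : AR = (P {ω | SD ω < SN ω}).toReal - (P {ω | SD ω > SN ω}).toReal) :
    AR = (1 / (p * (1 - p))) *
        (2 * ∑ s ∈ Finset.Icc 1 k,
            (1 - q s) * π s * ∑ t ∈ Finset.Icc 1 (s - 1), q t * π t
          + ∑ s ∈ Finset.Icc 1 k, q s * (1 - q s) * π s ^ 2) - 1 := by
  have hp1' : 1 - p ≠ 0 := by linarith
  have hsumD : ∑ s ∈ Icc 1 k, ℓD s = 1 := by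
    simp only [hℓD, ← sum_div, ← hp, div_self hp0.ne']
  have hsumN : ∑ s ∈ Icc 1 k, ℓN s = 1 := by
    simp only [hℓN, ← sum_div, sub_mul, one_mul, sum_sub_distrib, hπsum, ← hp, div_self hp1']
  have hlaw {X : Ω → ℕ} {ℓ : ℕ → ℝ}
      (h : ∀ s, (P {ω | X ω = s}).toReal = if s ∈ Icc 1 k then ℓ s else 0) :
      ∀ s ∈ Icc 1 k, P.real (X ⁻¹' {s}) = ℓ s := fun s hs => (h s).trans (if_pos hs)
  have hprod (s t : ℕ) : ℓD s * ℓN t = 1 / (p * (1 - p)) * (q s * π s * ((1 - q t) * π t)) := by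
    rw [hℓD, hℓN]; field_simp
  have hprob (r : ℕ → ℕ → Prop) [DecidableRel r] :
      P.real {ω | r (SD ω) (SN ω)} = 1 / (p * (1 - p)) *
        ∑ s ∈ Icc 1 k, ∑ t ∈ Icc 1 k with r s t, q s * π s * ((1 - q t) * π t) := by
    simp_rw [hindep.measureReal_eq_sum hSDm hSNm (hlaw hSDlaw) (hlaw hSNlaw) hsumD hsumN r,
      hprod, mul_sum]
  rw [hAR.trans (measureReal_lt_sub_measureReal_gt hSDm hSNm), hprob, hprob,
    sum_Icc_sum_filter_lt, sum_sum_filter_eq]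
  have hdiag : ∑ s ∈ Icc 1 k, q s * π s * ((1 - q s) * π s) =
      ∑ s ∈ Icc 1 k, q s * (1 - q s) * π s ^ 2 := sum_congr rfl fun s _ => by ring
  rw [hdiag]
  ring

/-- The accuracy ratio of a discrete rating model, computed from independent
grade variables `S_D`, `S_N` whose mass functions `ℓ_D(s) = q(s)π(s)/p` and
`ℓ_N(s) = (1−q(s))π(s)/(1−p)` are obtained from the rating profile `π` and the PD curve `q`
by Bayesian inversion, is given by the ex-ante formula
`AR = (1/(p(1−p)))·(2·Σ_s (1−q(s))π(s)·Σ_{t<s} q(t)π(t) + Σ_s q(s)(1−q(s))π(s)²) − 1`. -/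
theorem discrete_accuracy_ratio_ex_ante
    {Ω : Type*} [MeasurableSpace Ω] (P : Measure Ω) [IsProbabilityMeasure P]
    (k : ℕ) (hk : 1 ≤ k) (π q : ℕ → ℝ)
    (hπ : ∀ s ∈ Finset.Icc 1 k, 0 ≤ π s ∧ π s ≤ 1)
    (hπsum : ∑ s ∈ Finset.Icc 1 k, π s = 1)
    (hq : ∀ s ∈ Finset.Icc 1 k, 0 ≤ q s ∧ q s ≤ 1)
    (p : ℝ) (hp : p = ∑ s ∈ Finset.Icc 1 k, q s * π s)
    (hp0 : 0 < p) (hp1 : p < 1)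
    (ℓD ℓN : ℕ → ℝ)
    (hℓD : ∀ s, ℓD s = q s * π s / p)
    (hℓN : ∀ s, ℓN s = (1 - q s) * π s / (1 - p))
    (SD SN : Ω → ℕ) (hSDm : Measurable SD) (hSNm : Measurable SN)
    (hindep : IndepFun SD SN P)
    (hSDlaw : ∀ s : ℕ,
      (P {ω | SD ω = s}).toReal = if s ∈ Finset.Icc 1 k then ℓD s else 0)
    (hSNlaw : ∀ s : ℕ,
      (P {ω | SN ω = s}).toReal = if s ∈ Finset.Icc 1 k then ℓN s else 0)
    (AR : ℝ)
    (hAR : AR = (P {ω | SD ω < SN ω}).toReal - (P {ω | SD ω > SN ω}).toReal) :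
    AR = (1 / (p * (1 - p))) *
        (2 * ∑ s ∈ Finset.Icc 1 k,
            (1 - q s) * π s * ∑ t ∈ Finset.Icc 1 (s - 1), q t * π t
          + ∑ s ∈ Finset.Icc 1 k, q s * (1 - q s) * π s ^ 2) - 1 :=
  discrete_accuracy_ratio_ex_ante_general P k π q hπsum p hp hp0 hp1 ℓD ℓN hℓD hℓN SD SN hSDm hSNm
    hindep hSDlaw hSNlaw AR hAR
end
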